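/- Let |q| < 1, |ρ| < 1 and let x, y be real. For every integer n ≥ 1: P_n(x|y,ρ,q) = (ρ²;q)_n Σ_{i=0}^{n} [n choose i]_q (-1)^i q^{i(i-1)/2} ρ^i H_{n-i}(x|q) P_i(y|x,ρ,q)/(ρ²;q)_i. -/

import Mathlib

open MeasureTheory Real Finset
open scoped Classical

noncomputable section

/-- The q-bracket `[n]_q = 1 + q + ... + q^(n-1)`. -/
def qBracket (q : ℝ) (n : ℕ) : ℝ := ∑ i ∈ Finset.range n, q ^ i

/-- The q-factorial `[n]_q!`. -/
def qFactorial (q : ℝ) (n : ℕ) : ℝ := ∏ i ∈ Finset.range n, qBracket q (i + 1)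

/-- The q-binomial coefficient `[n choose k]_q`, equal to `0` when `k > n`. -/
def qBinom (q : ℝ) (n k : ℕ) : ℝ :=
  if k ≤ n then qFactorial q n / (qFactorial q (n - k) * qFactorial q k) else 0

/-- The q-Pochhammer symbol `(a;q)_n`. -/
def qPoch (a q : ℝ) (n : ℕ) : ℝ := ∏ i ∈ Finset.range n, (1 - a * q ^ i)

/-- The infinite q-Pochhammer symbol `(a;q)_∞`. -/
def qPochInf (a q : ℝ) : ℝ := ∏' i : ℕ, (1 - a * q ^ i)

/-- The q-Hermite polynomials `H_n(x|q)`. -/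
def qHermite (q x : ℝ) : ℕ → ℝ
  | 0 => 1
  | 1 => x
  | (n + 2) => x * qHermite q x (n + 1) - qBracket q (n + 1) * qHermite q x n

/-- The Al-Salam--Chihara polynomials `P_n(x|y,ρ,q)`. -/
def ASC (q x y ρ : ℝ) : ℕ → ℝ
  | 0 => 1
  | 1 => x - ρ * y
  | (n + 2) => (x - ρ * y * q ^ (n + 1)) * ASC q x y ρ (n + 1) -
      (1 - ρ ^ 2 * q ^ n) * qBracket q (n + 1) * ASC q x y ρ n

/-- The auxiliary polynomials `B_n(y|q)`. -/
def Bpoly (q y : ℝ) : ℕ → ℝ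
  | 0 => 1
  | 1 => -y
  | (n + 2) => -q ^ (n + 1) * y * Bpoly q y (n + 1) + q ^ n * qBracket q (n + 1) * Bpoly q y n

/-- The support interval `S(q) = [-2/√(1-q), 2/√(1-q)]`. -/
def Sset (q : ℝ) : Set ℝ := Set.Icc (-2 / Real.sqrt (1 - q)) (2 / Real.sqrt (1 - q))

/-- The auxiliary quadratic `r_k(t|q) = (1+q^k)² - (1-q) t q^k`. -/
def rAux (q t : ℝ) (k : ℕ) : ℝ := (1 + q ^ k) ^ 2 - (1 - q) * t * q ^ k

/-- The density `f_N(x|q)` making the q-Hermite polynomials orthogonal. -/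
def fN (q x : ℝ) : ℝ :=
  if x ∈ Sset q then
    qPochInf q q * Real.sqrt (1 - q) / (2 * Real.pi * Real.sqrt (rAux q (x ^ 2) 0)) *
      ∏' k : ℕ, rAux q (x ^ 2) k
  else 0

/-- The auxiliary quadratic `v_0(x,y|ρ,q)`. -/
def v0 (q x y ρ : ℝ) : ℝ :=
  (1 - ρ ^ 2) ^ 2 - (1 - q) * ρ * (1 + ρ ^ 2) * x * y + (1 - q) * ρ ^ 2 * (x ^ 2 + y ^ 2)

/-- The auxiliary quadratic `v_k(x,y|ρ,q) = v_0(x,y|ρ q^k,q)`. -/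
def vAux (q x y ρ : ℝ) (k : ℕ) : ℝ := v0 q x y (ρ * q ^ k)

/-- The density `f_CN(x|y,ρ,q)` making the Al-Salam--Chihara polynomials orthogonal. -/
def fCN (q x y ρ : ℝ) : ℝ :=
  if x ∈ Sset q then
    Real.sqrt (1 - q) * qPochInf q q * qPochInf (ρ ^ 2) q /
        (2 * Real.pi * Real.sqrt (rAux q (x ^ 2) 0)) *
      ∏' k : ℕ, rAux q (x ^ 2) k / vAux q x y ρ k
  else 0

/-- The polynomials `Q_{m,k}(x,y|ρ,q)`. -/
def Qmk (q x y ρ : ℝ) (m k : ℕ) : ℝ :=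
  ∑ s ∈ Finset.range (k + 1), (-1 : ℝ) ^ s * q ^ (s * (s - 1) / 2) * qBinom q k s * ρ ^ s *
    qHermite q y (k - s) * ASC q x y ρ (m + s) / qPoch (ρ ^ 2) q (m + s)

/-- The polynomials `C_n(x,y|ρ₁,ρ₂,ρ₃,q)`. -/
def Cn (q x y ρ₁ ρ₂ ρ₃ : ℝ) (n : ℕ) : ℝ :=
  ∑ i ∈ Finset.range (n + 1), qBinom q n i * ρ₁ ^ (n - i) * ρ₂ ^ i * Qmk q x y ρ₃ (n - i) i

/-- The q-analogue `f_3D` of the 3-dimensional Kibble--Slepian expansion. -/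
def f3D (q x₁ x₂ x₃ ρ₁₂ ρ₁₃ ρ₂₃ : ℝ) : ℝ :=
  fN q x₁ * fN q x₂ * fN q x₃ *
    ∑' p : ℕ × ℕ × ℕ,
      ρ₁₂ ^ p.2.1 * ρ₂₃ ^ p.2.2 * ρ₁₃ ^ p.1 /
          (qFactorial q p.1 * qFactorial q p.2.1 * qFactorial q p.2.2) *
        qHermite q x₁ (p.1 + p.2.1) * qHermite q x₂ (p.2.1 + p.2.2) *
        qHermite q x₃ (p.1 + p.2.2)

/-!
After division by `(ρ²;q)_n` the right-hand side is the q-binomial convolution `S_n` of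
`H_•(x|q)` with `(-ρ)^i q^(i choose 2) P_i(y|x,ρ,q) / (ρ²;q)_i`, and it suffices to show that
`S_0 = 1` and `(1 - ρ² q^m) S_{m+1} = (x - ρ y q^m) S_m - [m]_q S_{m-1}`, the recurrence of
`P_n(x|y,ρ,q) / (ρ²;q)_n`. For the convolution this follows from the q-Pascal rule, from
absorbing factors `[j]_q` via `[n+1 choose i]_q [n+1-i]_q = [n+1]_q [n choose i]_q`, and from the
three-term recurrences of `H(x|q)` and `P(y|x,ρ,q)`; the factor `1 - ρ² q^m` is split inside the
convolution as `(1 - ρ² q^i) + ρ² q^i (1 - q^(m-i))`.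
-/

theorem qBracket_zero (q : ℝ) : qBracket q 0 = 0 := by simp [qBracket]

theorem qBracket_add (q : ℝ) (a b : ℕ) :
    qBracket q (a + b) = qBracket q a + q ^ a * qBracket q b := by
  simp only [qBracket, sum_range_add, mul_sum, pow_add]

theorem one_sub_pow_eq_mul_qBracket (q : ℝ) (m : ℕ) : 1 - q ^ m = (1 - q) * qBracket q m := by
  rw [qBracket, mul_comm, geom_sum_mul_neg]

theorem qBracket_succ_pos {q : ℝ} (hq : |q| < 1) (n : ℕ) : 0 < qBracket q (n + 1) := by
  have hpow : q ^ (n + 1) < 1 := (le_abs_self _).trans_lt <| by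
    rw [abs_pow]; exact pow_lt_one₀ (abs_nonneg q) hq n.succ_ne_zero
  have h1q : 0 < 1 - q := by linarith [abs_lt.mp hq]
  refine pos_of_mul_pos_right ?_ h1q.le
  linarith [one_sub_pow_eq_mul_qBracket q (n + 1)]

theorem qFactorial_zero (q : ℝ) : qFactorial q 0 = 1 := by simp [qFactorial]

theorem qFactorial_succ (q : ℝ) (n : ℕ) :
    qFactorial q (n + 1) = qFactorial q n * qBracket q (n + 1) :=
  prod_range_succ _ _

theorem qFactorial_ne_zero {q : ℝ} (hq : ∀ k, qBracket q (k + 1) ≠ 0) (n : ℕ) :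
    qFactorial q n ≠ 0 :=
  prod_ne_zero_iff.mpr fun i _ => hq i

section qBinom

variable {q : ℝ}

theorem qBinom_zero_right (hq : ∀ k, qBracket q (k + 1) ≠ 0) (n : ℕ) : qBinom q n 0 = 1 := by
  rw [qBinom, if_pos n.zero_le, Nat.sub_zero, qFactorial_zero, mul_one,
    div_self (qFactorial_ne_zero hq n)]

theorem qBinom_self (hq : ∀ k, qBracket q (k + 1) ≠ 0) (n : ℕ) : qBinom q n n = 1 := by
  rw [qBinom, if_pos le_rfl, Nat.sub_self, qFactorial_zero, one_mul,
    div_self (qFactorial_ne_zero hq n)]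

theorem qBinom_of_lt {n k : ℕ} (h : n < k) : qBinom q n k = 0 :=
  if_neg (by omega)

theorem qBinom_sub {n i : ℕ} (h : i ≤ n) : qBinom q n (n - i) = qBinom q n i := by
  rw [qBinom, qBinom, if_pos (Nat.sub_le n i), if_pos h, Nat.sub_sub_self h, mul_comm]

theorem qBinom_succ_succ (hq : ∀ k, qBracket q (k + 1) ≠ 0) (n i : ℕ) :
    qBinom q (n + 1) (i + 1) = qBinom q n (i + 1) + q ^ (n - i) * qBinom q n i := by
  rcases lt_trichotomy i n with hlt | rfl | hgt
  · obtain ⟨k, rfl⟩ : ∃ k, n = i + 1 + k := ⟨n - (i + 1), by omega⟩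
    rw [qBinom, if_pos (by omega), qBinom, if_pos (by omega), qBinom, if_pos (by omega),
      show i + 1 + k + 1 - (i + 1) = k + 1 by omega, show i + 1 + k - (i + 1) = k by omega,
      show i + 1 + k - i = k + 1 by omega, qFactorial_succ q (i + 1 + k), qFactorial_succ q k,
      qFactorial_succ q i, show i + 1 + k + 1 = k + 1 + (i + 1) by ring, qBracket_add]
    have := qFactorial_ne_zero hq
    field_simp [hq i, hq k]
  · rw [qBinom_self hq, qBinom_self hq, qBinom_of_lt (Nat.lt_succ_self i), Nat.sub_self]
    ring
  · rw [qBinom_of_lt (by omega), qBinom_of_lt (by omega), qBinom_of_lt hgt]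
    ring

theorem qBinom_succ_mul_qBracket (hq : ∀ k, qBracket q (k + 1) ≠ 0) (n i : ℕ) :
    qBinom q (n + 1) i * qBracket q (n + 1 - i) = qBracket q (n + 1) * qBinom q n i := by
  rcases le_or_gt i n with hle | hgt
  · obtain ⟨k, rfl⟩ : ∃ k, n = i + k := ⟨n - i, by omega⟩
    rw [qBinom, if_pos (by omega), qBinom, if_pos hle, show i + k + 1 - i = k + 1 by omega,
      show i + k - i = k by omega, qFactorial_succ q (i + k), qFactorial_succ q k]
    have := qFactorial_ne_zero hq
    field_simp [hq k]
  · rw [qBinom_of_lt hgt, Nat.sub_eq_zero_of_le hgt, qBracket_zero]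
    ring

end qBinom

def qConv (q : ℝ) (a b : ℕ → ℝ) (n : ℕ) : ℝ :=
  ∑ i ∈ range (n + 1), qBinom q n i * a (n - i) * b i

section qConv

variable {q : ℝ}

theorem qConv_comm (a b : ℕ → ℝ) (n : ℕ) : qConv q a b n = qConv q b a n := by
  rw [qConv, ← sum_range_reflect]
  refine sum_congr rfl fun i hi => ?_
  have hi : i ≤ n := Nat.lt_succ_iff.mp (mem_range.mp hi)
  rw [Nat.add_sub_cancel, qBinom_sub hi, Nat.sub_sub_self hi]
  ring

theorem qConv_linear_left {a a₁ a₂ : ℕ → ℝ} (b : ℕ → ℝ) (c₁ c₂ : ℝ)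
    (h : ∀ j, a j = c₁ * a₁ j + c₂ * a₂ j) (n : ℕ) :
    qConv q a b n = c₁ * qConv q a₁ b n + c₂ * qConv q a₂ b n := by
  simp only [qConv, h, mul_sum, ← sum_add_distrib]
  exact sum_congr rfl fun i _ => by ring

theorem qConv_linear_right (a : ℕ → ℝ) {b b₁ b₂ : ℕ → ℝ} (c₁ c₂ : ℝ)
    (h : ∀ i, b i = c₁ * b₁ i + c₂ * b₂ i) (n : ℕ) :
    qConv q a b n = c₁ * qConv q a b₁ n + c₂ * qConv q a b₂ n := by
  simp only [qConv_comm a]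
  exact qConv_linear_left a c₁ c₂ h n

theorem qConv_const_mul_right (a b : ℕ → ℝ) (c : ℝ) (n : ℕ) :
    qConv q a (fun i => c * b i) n = c * qConv q a b n := by
  simp only [qConv, mul_sum]
  exact sum_congr rfl fun i _ => by ring

theorem qConv_pow_mul_pow (a b : ℕ → ℝ) (n : ℕ) :
    qConv q (fun j => q ^ j * a j) (fun i => q ^ i * b i) n = q ^ n * qConv q a b n := by
  simp only [qConv, mul_sum]
  refine sum_congr rfl fun i hi => ?_
  have hpow : q ^ (n - i) * q ^ i = q ^ n := by
    rw [← pow_add, Nat.sub_add_cancel (Nat.lt_succ_iff.mp (mem_range.mp hi))]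
  linear_combination (qBinom q n i * a (n - i) * b i) * hpow

theorem qConv_succ (hq : ∀ k, qBracket q (k + 1) ≠ 0) (a b : ℕ → ℝ) (n : ℕ) :
    qConv q a b (n + 1) =
      qConv q (fun j => a (j + 1)) b n + qConv q (fun j => q ^ j * a j) (fun i => b (i + 1)) n := by
  have hshift : qConv q (fun j => a (j + 1)) b n =
      ∑ i ∈ range (n + 2), qBinom q n i * a (n + 1 - i) * b i := by
    rw [sum_range_succ, qBinom_of_lt (Nat.lt_succ_self n), qConv]
    simp only [zero_mul, add_zero]
    refine sum_congr rfl fun i hi => ?_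
    rw [show n + 1 - i = n - i + 1 by have := mem_range.mp hi; omega]
  rw [hshift, qConv, qConv, sum_range_succ', sum_range_succ' _ (n + 1), ← add_rotate,
    ← sum_add_distrib, qBinom_zero_right hq, qBinom_zero_right hq]
  congr 1
  refine sum_congr rfl fun i _ => ?_
  rw [qBinom_succ_succ hq, Nat.add_sub_add_right]
  ring

theorem qConv_qBracket_mul_left (hq : ∀ k, qBracket q (k + 1) ≠ 0) (a b : ℕ → ℝ)
    (n : ℕ) :
    qConv q (fun j => qBracket q j * a j) b n =
      qBracket q n * qConv q (fun j => a (j + 1)) b (n - 1) := by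
  cases n with
  | zero => simp [qConv, qBracket_zero]
  | succ n =>
    rw [qConv, sum_range_succ, Nat.sub_self, qBracket_zero, Nat.add_sub_cancel, qConv, mul_sum]
    simp only [zero_mul, mul_zero, add_zero]
    refine sum_congr rfl fun i hi => ?_
    have hbinom := qBinom_succ_mul_qBracket hq n i
    rw [show n + 1 - i = n - i + 1 by have := mem_range.mp hi; omega] at hbinom ⊢
    linear_combination (a (n - i + 1) * b i) * hbinom

theorem qConv_qBracket_mul_right (hq : ∀ k, qBracket q (k + 1) ≠ 0) (a b : ℕ → ℝ)
    (n : ℕ) :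
    qConv q a (fun i => qBracket q i * b i) n =
      qBracket q n * qConv q a (fun i => b (i + 1)) (n - 1) := by
  simp only [qConv_comm a]
  exact qConv_qBracket_mul_left hq b a n

end qConv

-- Here and below `j - 1` truncates at `j = 0`, where the factor `[0]_q = 0` kills the term.
theorem qHermite_succ (q x : ℝ) (j : ℕ) :
    qHermite q x (j + 1) = x * qHermite q x j - qBracket q j * qHermite q x (j - 1) := by
  cases j with
  | zero => simp [qHermite, qBracket_zero]
  | succ j => rfl

theorem qConv_qHermite_succ_left {q : ℝ} (hq : ∀ k, qBracket q (k + 1) ≠ 0) (x : ℝ)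
    (b : ℕ → ℝ) (n : ℕ) :
    qConv q (fun j => qHermite q x (j + 1)) b n =
      x * qConv q (qHermite q x) b n - qBracket q n * qConv q (qHermite q x) b (n - 1) := by
  rw [qConv_linear_left b x (-1) (a₁ := qHermite q x)
    (a₂ := fun j => qBracket q j * qHermite q x (j - 1))
    (fun j => by rw [qHermite_succ]; ring), qConv_qBracket_mul_left hq]
  simp only [Nat.add_sub_cancel]
  ring

theorem qPoch_succ (a q : ℝ) (n : ℕ) : qPoch a q (n + 1) = qPoch a q n * (1 - a * q ^ n) :=
  prod_range_succ _ _

theorem qPoch_ne_zero {a q : ℝ} (ha : ∀ i, 1 - a * q ^ i ≠ 0) (n : ℕ) : qPoch a q n ≠ 0 :=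
  prod_ne_zero_iff.mpr fun i _ => ha i

def ascRatio (q x y ρ : ℝ) (n : ℕ) : ℝ := ASC q x y ρ n / qPoch (ρ ^ 2) q n

theorem ascRatio_succ {q ρ : ℝ} (hρ : ∀ i, 1 - ρ ^ 2 * q ^ i ≠ 0) (x y : ℝ) (i : ℕ) :
    (1 - ρ ^ 2 * q ^ i) * ascRatio q x y ρ (i + 1) =
      (x - ρ * y * q ^ i) * ascRatio q x y ρ i - qBracket q i * ascRatio q x y ρ (i - 1) := by
  cases i with
  | zero =>
    have h0 : 1 - ρ ^ 2 ≠ 0 := by simpa using hρ 0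
    simp only [ascRatio, ASC, qPoch, qBracket_zero]
    simp [mul_div_cancel₀ _ h0]
  | succ j =>
    simp only [ascRatio, Nat.add_sub_cancel, qPoch_succ _ _ (j + 1), qPoch_succ _ _ j]
    rw [show ASC q x y ρ (j + 2) = (x - ρ * y * q ^ (j + 1)) * ASC q x y ρ (j + 1) -
      (1 - ρ ^ 2 * q ^ j) * qBracket q (j + 1) * ASC q x y ρ j from rfl]
    field_simp [qPoch_ne_zero hρ j, hρ j, hρ (j + 1)]

/-- By the q-binomial theorem, `[n choose i]_q * inverseCoeff q ρ i` is the coefficient of `tⁱ`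
in `(ρt;q)_n`. -/
def inverseCoeff (q ρ : ℝ) (i : ℕ) : ℝ := (-1) ^ i * q ^ (i * (i - 1) / 2) * ρ ^ i

theorem inverseCoeff_succ (q ρ : ℝ) (i : ℕ) :
    inverseCoeff q ρ (i + 1) = -ρ * q ^ i * inverseCoeff q ρ i := by
  rw [inverseCoeff, inverseCoeff, Nat.triangle_succ, pow_add]
  ring

section inverseSum

variable {q ρ : ℝ} (x y : ℝ)

def inverseTerm (q x y ρ : ℝ) (i : ℕ) : ℝ := inverseCoeff q ρ i * ascRatio q y x ρ i

def inverseSum (q x y ρ : ℝ) : ℕ → ℝ := qConv q (qHermite q x) (inverseTerm q x y ρ)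

def inverseTermShift (q x y ρ : ℝ) (i : ℕ) : ℝ :=
  inverseCoeff q ρ i * ascRatio q y x ρ (i + 1)

theorem inverseTerm_succ (i : ℕ) :
    inverseTerm q x y ρ (i + 1) = -ρ * (q ^ i * inverseTermShift q x y ρ i) := by
  rw [inverseTerm, inverseTermShift, inverseCoeff_succ]
  ring

theorem inverseTermShift_rec (hρ : ∀ i, 1 - ρ ^ 2 * q ^ i ≠ 0) (i : ℕ) :
    (1 - ρ ^ 2 * q ^ i) * inverseTermShift q x y ρ i =
      y * inverseTerm q x y ρ i +
        ρ * (qBracket q i * (q ^ (i - 1) * inverseTerm q x y ρ (i - 1)) -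
          x * (q ^ i * inverseTerm q x y ρ i)) := by
  have hrec := ascRatio_succ hρ y x i
  rw [inverseTermShift, inverseTerm]
  cases i with
  | zero =>
    simp only [qBracket_zero] at hrec ⊢
    linear_combination inverseCoeff q ρ 0 * hrec
  | succ j =>
    rw [Nat.add_sub_cancel, inverseTerm, inverseCoeff_succ] at *
    linear_combination (-ρ * q ^ j * inverseCoeff q ρ j) * hrec

theorem inverseSum_succ (hq : ∀ k, qBracket q (k + 1) ≠ 0) (m : ℕ) :
    inverseSum q x y ρ (m + 1) =
      x * inverseSum q x y ρ m - qBracket q m * inverseSum q x y ρ (m - 1) -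
        ρ * q ^ m * qConv q (qHermite q x) (inverseTermShift q x y ρ) m := by
  simp only [inverseSum, qConv_succ hq, qConv_qHermite_succ_left hq, inverseTerm_succ,
    qConv_const_mul_right, qConv_pow_mul_pow]
  ring

theorem one_sub_sq_mul_qConv_inverseTermShift_split (hq : ∀ k, qBracket q (k + 1) ≠ 0)
    (m : ℕ) :
    (1 - ρ ^ 2 * q ^ m) * qConv q (qHermite q x) (inverseTermShift q x y ρ) m =
      qConv q (qHermite q x) (fun i => (1 - ρ ^ 2 * q ^ i) * inverseTermShift q x y ρ i) m +
        ρ ^ 2 * (1 - q) * qBracket q m * qConv q (fun j => qHermite q x (j + 1))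
          (fun i => q ^ i * inverseTermShift q x y ρ i) (m - 1) := by
  have hdilate := qConv_pow_mul_pow (q := q) (qHermite q x) (inverseTermShift q x y ρ) m
  rw [qConv_linear_left _ 1 (-(1 - q)) (a₁ := qHermite q x)
    (a₂ := fun j => qBracket q j * qHermite q x j)
    (fun j => by linear_combination (-qHermite q x j) * one_sub_pow_eq_mul_qBracket q j),
    qConv_qBracket_mul_left hq] at hdilate
  rw [qConv_linear_right _ 1 (-ρ ^ 2)
    (b := fun i => (1 - ρ ^ 2 * q ^ i) * inverseTermShift q x y ρ i)
    (b₁ := inverseTermShift q x y ρ)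
    (b₂ := fun i => q ^ i * inverseTermShift q x y ρ i) (fun i => by ring)]
  linear_combination ρ ^ 2 * hdilate

theorem qConv_one_sub_sq_mul_inverseTermShift (hq : ∀ k, qBracket q (k + 1) ≠ 0)
    (hρ : ∀ i, 1 - ρ ^ 2 * q ^ i ≠ 0) (m : ℕ) :
    qConv q (qHermite q x) (fun i => (1 - ρ ^ 2 * q ^ i) * inverseTermShift q x y ρ i) m =
      y * inverseSum q x y ρ m +
        ρ * (qBracket q m *
            qConv q (qHermite q x) (fun i => q ^ i * inverseTerm q x y ρ i) (m - 1) -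
          x * qConv q (qHermite q x) (fun i => q ^ i * inverseTerm q x y ρ i) m) := by
  rw [qConv_linear_right _ y ρ (inverseTermShift_rec x y hρ),
    qConv_linear_right _ 1 (-x) (b := fun i => qBracket q i * (q ^ (i - 1) *
      inverseTerm q x y ρ (i - 1)) - x * (q ^ i * inverseTerm q x y ρ i))
      (b₁ := fun i => qBracket q i * (q ^ (i - 1) * inverseTerm q x y ρ (i - 1)))
      (b₂ := fun i => q ^ i * inverseTerm q x y ρ i)
      (fun i => by ring),
    qConv_qBracket_mul_right hq]
  simp only [Nat.add_sub_cancel, inverseSum]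
  ring

theorem qConv_pow_mul_inverseTerm (hq : ∀ k, qBracket q (k + 1) ≠ 0) (k : ℕ) :
    qConv q (qHermite q x) (fun i => q ^ i * inverseTerm q x y ρ i) k =
      inverseSum q x y ρ k + ρ * (1 - q) * qBracket q k *
        qConv q (qHermite q x) (fun i => q ^ i * inverseTermShift q x y ρ i) (k - 1) := by
  rw [qConv_linear_right _ 1 (-(1 - q)) (b₁ := inverseTerm q x y ρ)
    (b₂ := fun i => qBracket q i * inverseTerm q x y ρ i)
    (fun i => by linear_combination (-inverseTerm q x y ρ i) * one_sub_pow_eq_mul_qBracket q i),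
    qConv_qBracket_mul_right hq]
  simp only [inverseTerm_succ, qConv_const_mul_right, inverseSum]
  ring

theorem one_sub_sq_mul_qConv_inverseTermShift (hq : ∀ k, qBracket q (k + 1) ≠ 0)
    (hρ : ∀ i, 1 - ρ ^ 2 * q ^ i ≠ 0) (m : ℕ) :
    (1 - ρ ^ 2 * q ^ m) * qConv q (qHermite q x) (inverseTermShift q x y ρ) m =
      (y - ρ * x) * inverseSum q x y ρ m + ρ * qBracket q m * inverseSum q x y ρ (m - 1) := by
  linear_combination one_sub_sq_mul_qConv_inverseTermShift_split x y hq m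
    + qConv_one_sub_sq_mul_inverseTermShift x y hq hρ m
    + ρ ^ 2 * (1 - q) * qBracket q m * qConv_qHermite_succ_left hq x
      (fun i => q ^ i * inverseTermShift q x y ρ i) (m - 1)
    - ρ * x * qConv_pow_mul_inverseTerm x y hq m
    + ρ * qBracket q m * qConv_pow_mul_inverseTerm x y hq (m - 1)

theorem inverseSum_rec (hq : ∀ k, qBracket q (k + 1) ≠ 0)
    (hρ : ∀ i, 1 - ρ ^ 2 * q ^ i ≠ 0) (m : ℕ) :
    (1 - ρ ^ 2 * q ^ m) * inverseSum q x y ρ (m + 1) =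
      (x - ρ * y * q ^ m) * inverseSum q x y ρ m -
        qBracket q m * inverseSum q x y ρ (m - 1) := by
  linear_combination (1 - ρ ^ 2 * q ^ m) * inverseSum_succ x y hq m
    - ρ * q ^ m * one_sub_sq_mul_qConv_inverseTermShift x y hq hρ m

theorem inverseSum_zero : inverseSum q x y ρ 0 = 1 := by
  simp [inverseSum, qConv, qBinom, qFactorial, inverseTerm, inverseCoeff, ascRatio, ASC, qPoch,
    qHermite]

theorem ASC_eq_qPoch_mul_inverseSum (hq : ∀ k, qBracket q (k + 1) ≠ 0)
    (hρ : ∀ i, 1 - ρ ^ 2 * q ^ i ≠ 0) (n : ℕ) :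
    ASC q x y ρ n = qPoch (ρ ^ 2) q n * inverseSum q x y ρ n := by
  induction n using Nat.twoStepInduction with
  | zero => simp [ASC, qPoch, inverseSum_zero]
  | one =>
    have hrec := inverseSum_rec x y hq hρ 0
    simp only [qBracket_zero, inverseSum_zero, pow_zero] at hrec
    simp only [ASC, qPoch, range_one, prod_singleton, pow_zero]
    linear_combination -hrec
  | more n ih₀ ih₁ =>
    have hrec := inverseSum_rec x y hq hρ (n + 1)
    rw [Nat.add_sub_cancel] at hrec
    rw [show ASC q x y ρ (n + 2) = (x - ρ * y * q ^ (n + 1)) * ASC q x y ρ (n + 1) -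
      (1 - ρ ^ 2 * q ^ n) * qBracket q (n + 1) * ASC q x y ρ n from rfl, ih₀, ih₁,
      qPoch_succ _ _ (n + 1), qPoch_succ _ _ n]
    linear_combination (-(qPoch (ρ ^ 2) q n * (1 - ρ ^ 2 * q ^ n))) * hrec

end inverseSum

theorem sq_mul_pow_lt_one {q ρ : ℝ} (hq : |q| < 1) (hρ : |ρ| < 1) (i : ℕ) :
    ρ ^ 2 * q ^ i < 1 :=
  calc ρ ^ 2 * q ^ i ≤ |ρ ^ 2 * q ^ i| := le_abs_self _
    _ = ρ ^ 2 * |q| ^ i := by rw [abs_mul, abs_pow, abs_pow, sq_abs]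
    _ ≤ ρ ^ 2 * 1 := by gcongr; exact pow_le_one₀ (abs_nonneg q) hq.le
    _ < 1 := by rw [mul_one]; exact (sq_lt_one_iff_abs_lt_one ρ).mpr hρ

theorem ASC_inverse_expansion_general (q ρ x y : ℝ) (hq : |q| < 1) (hρ : |ρ| < 1) (n : ℕ) :
    ASC q x y ρ n = qPoch (ρ ^ 2) q n * ∑ i ∈ Finset.range (n + 1),
      qBinom q n i * (-1 : ℝ) ^ i * q ^ (i * (i - 1) / 2) * ρ ^ i *
        qHermite q x (n - i) * ASC q y x ρ i / qPoch (ρ ^ 2) q i := by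
  rw [ASC_eq_qPoch_mul_inverseSum x y (fun k => (qBracket_succ_pos hq k).ne')
    (fun i => (sub_pos.mpr (sq_mul_pow_lt_one hq hρ i)).ne'), inverseSum, qConv]
  congr 1
  refine sum_congr rfl fun i _ => ?_
  rw [inverseTerm, inverseCoeff, ascRatio]
  ring

/-- Inverse expansion for the Al-Salam--Chihara polynomials. -/
theorem ASC_inverse_expansion (q ρ x y : ℝ) (hq : |q| < 1) (hρ : |ρ| < 1) (n : ℕ)
    (hn : 1 ≤ n) :
    ASC q x y ρ n = qPoch (ρ ^ 2) q n * ∑ i ∈ Finset.range (n + 1),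
      qBinom q n i * (-1 : ℝ) ^ i * q ^ (i * (i - 1) / 2) * ρ ^ i *
        qHermite q x (n - i) * ASC q y x ρ i / qPoch (ρ ^ 2) q i :=
  ASC_inverse_expansion_general q ρ x y hq hρ n
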